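/- Let Γ be a finite graph and let x, y ∈ A(Γ) be of the form x = (a^k)^g and y = (b^m)^h with a, b ∈ V(Γ), k, m nonzero integers, and g, h ∈ A(Γ). Define x* = a^g and y* = b^h. Then [x, y] = 1 if and only if [x*, y*] = 1. -/

import Mathlib

open scoped commutatorElement

/-- The set of commutator relations of a right-angled Artin group on a graph. -/
def raagRels {α : Type*} (Γ : SimpleGraph α) : Set (FreeGroup α) :=
  {r | ∃ u v : α, Γ.Adj u v ∧ r = ⁅FreeGroup.of u, FreeGroup.of v⁆}

/-- The right-angled Artin group on the graph `Γ`. -/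
def Raag {α : Type*} (Γ : SimpleGraph α) : Type _ := PresentedGroup (raagRels Γ)

instance {α : Type*} (Γ : SimpleGraph α) : Group (Raag Γ) :=
  inferInstanceAs (Group (PresentedGroup (raagRels Γ)))

/-- The standard generator of `Raag Γ` corresponding to a vertex. -/
def Raag.of {α : Type*} (Γ : SimpleGraph α) (v : α) : Raag Γ := PresentedGroup.of v

/-- The commutation graph of a subset `X` of a group `G`. -/
def commGraph (G : Type*) [Group G] (X : Set G) : SimpleGraph X where
  Adj x y := x ≠ y ∧ Commute x.1 y.1
  symm := ⟨fun _ _ ⟨h1, h2⟩ => ⟨h1.symm, h2.symm⟩⟩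
  loopless := ⟨fun _ ⟨h1, _⟩ => h1 rfl⟩

/-- The natural homomorphism `A(CG(X)) → G` extending the identity on `X`. -/
def natHom (G : Type*) [Group G] (X : Set G) : Raag (commGraph G X) →* G :=
  PresentedGroup.toGroup (f := Subtype.val) (by
    rintro r ⟨u, v, hadj, rfl⟩
    rw [map_commutatorElement]
    simp only [FreeGroup.lift_apply_of]
    exact commutatorElement_eq_one_iff_commute.mpr hadj.2)

/-- The star of a vertex: vertices equal or adjacent to `v`. -/
def starSet {α : Type*} (Γ : SimpleGraph α) (v : α) : Set α := {w | w = v ∨ Γ.Adj v w}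

/-- The link of a vertex: vertices adjacent to `v`. -/
def linkSet {α : Type*} (Γ : SimpleGraph α) (v : α) : Set α := {w | Γ.Adj v w}

/-- The double of a graph `X` along the star of a vertex `v`:
two copies of the complement of the star, glued along the star. -/
def doubleStar {α : Type*} (X : SimpleGraph α) (v : α) :
    SimpleGraph ((Fin 2 × {w : α // w ∉ starSet X v}) ⊕ {w : α // w ∈ starSet X v}) where
  Adj a b :=
    match a, b with
    | .inl (i, x), .inl (j, y) => i = j ∧ X.Adj x.1 y.1
    | .inl (_, x), .inr y => X.Adj x.1 y.1
    | .inr x, .inl (_, y) => X.Adj x.1 y.1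
    | .inr x, .inr y => X.Adj x.1 y.1
  symm := by
    refine ⟨?_⟩
    rintro (⟨i, x⟩ | x) (⟨j, y⟩ | y) h
    · exact ⟨h.1.symm, h.2.symm⟩
    · exact h.symm
    · exact h.symm
    · exact h.symm
  loopless := by
    refine ⟨?_⟩
    rintro (⟨i, x⟩ | x) h
    · exact X.loopless.irrefl _ h.2
    · exact X.loopless.irrefl _ h

/-- The group element represented by a word (a list of letters with signs). -/
def wprod {α : Type*} (Γ : SimpleGraph α) (l : List (α × Bool)) : Raag Γ :=
  (l.map fun p => if p.2 then Raag.of Γ p.1 else (Raag.of Γ p.1)⁻¹).prod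

/-- The word length of an element of `Raag Γ` with respect to the vertex generators. -/
noncomputable def wordLength {α : Type*} (Γ : SimpleGraph α) (w : Raag Γ) : ℕ :=
  sInf {n | ∃ l : List (α × Bool), l.length = n ∧ wprod Γ l = w}

/-- A word is reduced if its length realizes the word length of the element it represents. -/
def WordReduced {α : Type*} (Γ : SimpleGraph α) (l : List (α × Bool)) : Prop :=
  l.length = wordLength Γ (wprod Γ l)

/-- The right-counting vector of a word: `rcv Γ l i` is the minimal word length of `y`
such that the suffix of `l` from position `i` equals `x * sᵢ^{eᵢ} * y` with `x` in the
subgroup generated by the link of `sᵢ`. -/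
noncomputable def rcv {α : Type*} (Γ : SimpleGraph α) (l : List (α × Bool))
    (i : Fin l.length) : ℕ :=
  sInf {m | ∃ x y : Raag Γ,
    x ∈ Subgroup.closure (Raag.of Γ '' linkSet Γ (l.get i).1) ∧
    wordLength Γ y = m ∧
    wprod Γ (l.drop i) = x * wprod Γ [l.get i] * y}

/-- The exponent used by the inflating map `σ` at position `i` of the word `l`. -/
noncomputable def sigmaExp {α : Type*} (Γ : SimpleGraph α) (M : ℕ) (l : List (α × Bool))
    (i : Fin l.length) : ℤ :=
  if (l.get i).2 then (4 : ℤ) ^ (M - 1 - rcv Γ l i)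
  else -2 * (4 : ℤ) ^ (M - 1 - rcv Γ l i)

/-- The inflating map `σ` applied to a word `l`, as an element of `Raag Γ`. -/
noncomputable def sigmaProd {α : Type*} (Γ : SimpleGraph α) (M : ℕ)
    (l : List (α × Bool)) : Raag Γ :=
  (List.ofFn fun i : Fin l.length => (Raag.of Γ (l.get i).1) ^ (sigmaExp Γ M l i)).prod

/-!
The reverse implication holds in every group, since powers of commuting elements commute. For the
forward one it suffices that whatever commutes with `a ^ k` commutes with `a`, applied once to each
side after conjugating. To see this, split `A(Γ)` as the amalgamated product
`A(Γ ∖ a) *_{A(lk a)} A(st a)`. There `a ^ k` is central in the factor `A(st a)` but not in the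
amalgamated subgroup, and the normal form theorem for amalgams forces its centralizer into
`A(st a)`, where `a` is central.
-/

open Function Monoid

namespace Monoid.PushoutI

variable {ι : Type*} {G : ι → Type*} [∀ i, Group (G i)] {H : Type*} [Group H]
  {φ : ∀ i, H →* G i}

variable (φ) in
def IsReducedSeq (l : List (Σ i, G i)) : Prop :=
  l.IsChain (fun p q => p.1 ≠ q.1) ∧ ∀ p ∈ l, p.2 ∉ (φ p.1).range

variable (φ) in
def seqProd (l : List (Σ i, G i)) : PushoutI φ :=
  (l.map fun p => of p.1 p.2).prod

def seqInv (l : List (Σ i, G i)) : List (Σ i, G i) :=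
  (l.map fun p => ⟨p.1, p.2⁻¹⟩).reverse

@[simp] theorem seqProd_nil : seqProd φ [] = 1 := rfl

@[simp] theorem seqProd_cons (p : Σ i, G i) (l : List (Σ i, G i)) :
    seqProd φ (p :: l) = of p.1 p.2 * seqProd φ l := List.prod_cons

@[simp] theorem seqProd_append (l₁ l₂ : List (Σ i, G i)) :
    seqProd φ (l₁ ++ l₂) = seqProd φ l₁ * seqProd φ l₂ := by
  simp [seqProd]

@[simp] theorem seqProd_seqInv (l : List (Σ i, G i)) :
    seqProd φ (seqInv l) = (seqProd φ l)⁻¹ := by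
  simp [seqInv, seqProd, List.prod_inv_reverse, List.map_reverse, Function.comp_def]

theorem IsReducedSeq.append {l₁ l₂ : List (Σ i, G i)} (h₁ : IsReducedSeq φ l₁)
    (h₂ : IsReducedSeq φ l₂) (h : ∀ p ∈ l₁.getLast?, ∀ q ∈ l₂.head?, p.1 ≠ q.1) :
    IsReducedSeq φ (l₁ ++ l₂) :=
  ⟨h₁.1.append h₂.1 h, by simpa [or_imp, forall_and] using And.intro h₁.2 h₂.2⟩

theorem isReducedSeq_singleton {j : ι} {b : G j} (hb : b ∉ (φ j).range) :
    IsReducedSeq φ [⟨j, b⟩] :=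
  ⟨List.isChain_singleton _, by simpa using hb⟩

theorem IsReducedSeq.seqInv {l : List (Σ i, G i)} (hl : IsReducedSeq φ l) :
    IsReducedSeq φ (seqInv l) := by
  refine ⟨?_, ?_⟩
  · rw [PushoutI.seqInv, List.isChain_reverse, List.isChain_map]
    exact hl.1.imp fun _ _ h => Ne.symm h
  · simp only [PushoutI.seqInv, List.mem_reverse, List.mem_map]
    rintro _ ⟨p, hp, rfl⟩
    simpa using hl.2 p hp

theorem IsReducedSeq.eq_nil_of_seqProd_mem_range (hφ : ∀ i, Injective (φ i))
    {l : List (Σ i, G i)} (hl : IsReducedSeq φ l) (h : seqProd φ l ∈ (base φ).range) :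
    l = [] := by
  let w : CoprodI.Word G :=
    ⟨l, fun p hp h1 => hl.2 p hp (h1 ▸ Subgroup.one_mem _), hl.1⟩
  have hw : w.prod = (l.map fun p => CoprodI.of p.2).prod := rfl
  have hprod : ofCoprodI w.prod = seqProd φ l := by
    simp [hw, map_list_prod, seqProd, Function.comp_def]
  have := Reduced.eq_empty_of_mem_range (w := w) hφ hl.2 (hprod ▸ h)
  exact congrArg CoprodI.Word.toList this

theorem exists_eq_base_mul_seqProd (hφ : ∀ i, Injective (φ i)) (g : PushoutI φ) :
    ∃ h : H, ∃ l : List (Σ i, G i), IsReducedSeq φ l ∧ g = base φ h * seqProd φ l := by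
  classical
  obtain ⟨d⟩ := NormalWord.transversal_nonempty φ hφ
  set w := NormalWord.equiv (φ := φ) (d := d) g
  refine ⟨w.head, w.toList, ⟨w.chain_ne, ?_⟩, ?_⟩
  · -- a letter of a normal word is a nontrivial coset representative, so not in the base
    rintro ⟨i, y⟩ hy hyφ
    refine w.ne_one _ hy ?_
    have hset := w.normalized i _ hy
    have hself := (d.compl i).equiv_snd_eq_self_of_mem_of_one_mem (Subgroup.one_mem _) hset
    have hone := (d.compl i).equiv_snd_eq_one_of_mem_of_one_mem (d.one_mem i) hyφ
    exact (congrArg Subtype.val hself).symm.trans (congrArg Subtype.val hone)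
  · calc g = w.prod := ((NormalWord.equiv (φ := φ) (d := d)).symm_apply_apply g).symm
      _ = base φ w.head * seqProd φ w.toList := by
        simp [NormalWord.prod, CoprodI.Word.prod, map_list_prod, seqProd, Function.comp_def]

section Centralizer

variable {j : ι} {b : G j}

theorem not_commute_seqProd_of_ends_ne (hφ : ∀ i, Injective (φ i)) (hb : b ∉ (φ j).range)
    {l : List (Σ i, G i)} (hl : IsReducedSeq φ l) (hne : l ≠ [])
    (hhead : ∀ p ∈ l.head?, p.1 ≠ j) (hlast : ∀ p ∈ l.getLast?, p.1 ≠ j) :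
    ¬Commute (seqProd φ l) (of j b) := by
  intro hc
  have hbinv : b⁻¹ ∉ (φ j).range := by simpa using hb
  obtain ⟨p, hp⟩ := List.getLast?_isSome.mpr hne |> Option.isSome_iff_exists.mp
  -- `l b l⁻¹ b⁻¹` is a reduced sequence whose product is trivial
  have hred : IsReducedSeq φ (l ++ [⟨j, b⟩] ++ (seqInv l ++ [⟨j, b⁻¹⟩])) := by
    refine ((hl.append (isReducedSeq_singleton hb) ?_).append
      (hl.seqInv.append (isReducedSeq_singleton hbinv) ?_) ?_)
    · simpa using hlast
    · simp only [seqInv, List.getLast?_reverse, List.head?_map, Option.mem_def,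
        Option.map_eq_some_iff, List.head?_cons, Option.some.injEq]
      rintro _ ⟨q, hq, rfl⟩ _ rfl
      exact hhead q hq
    · simp only [List.getLast?_append, List.getLast?_singleton, Option.some_or,
        Option.mem_def, Option.some.injEq, seqInv]
      rintro _ rfl q hq
      rw [List.head?_append, List.head?_reverse, List.getLast?_map, hp] at hq
      simp only [Option.map_some, Option.some_or, Option.some.injEq] at hq
      subst hq
      exact (hlast p hp).symm
  have hone : seqProd φ (l ++ [⟨j, b⟩] ++ (seqInv l ++ [⟨j, b⁻¹⟩])) = 1 := by
    simp only [seqProd_append, seqProd_seqInv, seqProd_cons, seqProd_nil, mul_one, map_inv]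
    rw [hc.eq]; group
  simpa using hred.eq_nil_of_seqProd_mem_range hφ (hone ▸ Subgroup.one_mem _)

theorem IsReducedSeq.eq_nil_of_commute (hφ : ∀ i, Injective (φ i)) (hb : b ∉ (φ j).range)
    (hbc : ∀ x : G j, Commute x b) {l : List (Σ i, G i)} (hl : IsReducedSeq φ l)
    (hhead : ∀ p ∈ l.head?, p.1 ≠ j) (hc : Commute (seqProd φ l) (of j b)) : l = [] := by
  obtain rfl | ⟨s, ⟨i, y⟩, rfl⟩ := l.eq_nil_or_concat'
  · rfl
  by_cases hij : i = j
  · subst hij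
    have hs : Commute (seqProd φ s) (of i b) := by
      have hy : Commute (of i y) (of (φ := φ) i b) := (hbc y).map _
      simpa using hc.mul_left hy.inv_left
    obtain rfl | hsne := eq_or_ne s []
    · simp at hhead
    refine absurd hs
      (not_commute_seqProd_of_ends_ne hφ hb ⟨hl.1.left_of_append, ?_⟩ hsne ?_ ?_)
    · exact fun p hp => hl.2 p (List.mem_append_left _ hp)
    · intro p hp
      exact hhead p (by rw [List.head?_append, Option.mem_def.mp hp]; rfl)
    · intro p hp
      exact (List.isChain_append.mp hl.1).2.2 p hp _ rfl
  · exact absurd hc (not_commute_seqProd_of_ends_ne hφ hb hl (by simp) hhead (by simpa using hij))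

theorem IsReducedSeq.exists_seqProd_eq_of_commute (hφ : ∀ i, Injective (φ i))
    (hb : b ∉ (φ j).range) (hbc : ∀ x : G j, Commute x b) {l : List (Σ i, G i)}
    (hl : IsReducedSeq φ l) (hc : Commute (seqProd φ l) (of j b)) :
    ∃ y : G j, seqProd φ l = of j y := by
  obtain _ | ⟨⟨i, x⟩, t⟩ := l
  · exact ⟨1, by simp⟩
  by_cases hij : i = j
  · subst hij
    have hx : Commute (of i x) (of (φ := φ) i b) := (hbc x).map _
    have ht : t = [] := by
      refine IsReducedSeq.eq_nil_of_commute hφ hb hbc ⟨hl.1.tail, ?_⟩ ?_ ?_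
      · exact fun p hp => hl.2 p (List.mem_cons_of_mem _ hp)
      · intro p hp
        exact fun h => (List.isChain_cons.mp hl.1).1 p hp h.symm
      · simpa using hx.inv_left.mul_left hc
    exact ⟨x, by simp [ht]⟩
  · exact absurd (hl.eq_nil_of_commute hφ hb hbc (by simpa using hij) hc) (by simp)

end Centralizer

theorem mem_range_of_commute_of (hφ : ∀ i, Injective (φ i)) {j : ι} {b : G j}
    (hb : b ∉ (φ j).range) (hbc : ∀ x : G j, Commute x b) {g : PushoutI φ}
    (hg : Commute g (of j b)) : g ∈ (of j).range := by
  obtain ⟨h, l, hl, rfl⟩ := exists_eq_base_mul_seqProd hφ g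
  have hh : Commute (base φ h) (of j b) := by
    simpa [of_apply_eq_base] using (hbc (φ j h)).map (of (φ := φ) j)
  obtain ⟨y, hy⟩ :=
    hl.exists_seqProd_eq_of_commute hφ hb hbc (by simpa using hh.inv_left.mul_left hg)
  exact ⟨φ j h * y, by rw [map_mul, of_apply_eq_base, hy]⟩

end Monoid.PushoutI

namespace Raag

variable {V : Type*} {Γ : SimpleGraph V}

theorem commute_of_adj {u v : V} (h : Γ.Adj u v) : Commute (of Γ u) (of Γ v) := by
  rw [← commutatorElement_eq_one_iff_commute]
  exact (map_commutatorElement (PresentedGroup.mk (raagRels Γ)) _ _).symm.trans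
    (PresentedGroup.one_of_mem ⟨u, v, h, rfl⟩)

def lift {G : Type*} [Group G] (f : V → G) (hf : ∀ u v, Γ.Adj u v → Commute (f u) (f v)) :
    Raag Γ →* G :=
  PresentedGroup.toGroup (f := f) (by
    rintro r ⟨u, v, huv, rfl⟩
    simpa [map_commutatorElement] using commutatorElement_eq_one_iff_commute.mpr (hf u v huv))

@[simp] theorem lift_of {G : Type*} [Group G] (f : V → G)
    (hf : ∀ u v, Γ.Adj u v → Commute (f u) (f v)) (v : V) : lift f hf (of Γ v) = f v :=
  PresentedGroup.toGroup.of _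

@[ext] theorem hom_ext {G : Type*} [Group G] {f₁ f₂ : Raag Γ →* G}
    (h : ∀ v, f₁ (of Γ v) = f₂ (of Γ v)) : f₁ = f₂ :=
  PresentedGroup.ext h

def map {W : Type*} {Δ : SimpleGraph W} (f : Γ →g Δ) : Raag Γ →* Raag Δ :=
  lift (fun v => of Δ (f v)) fun _ _ h => commute_of_adj (f.map_adj h)

@[simp] theorem map_of {W : Type*} {Δ : SimpleGraph W} (f : Γ →g Δ) (v : V) :
    map f (of Γ v) = of Δ (f v) :=
  lift_of _ _ _

theorem map_induceHomOfLE_injective {s t : Set V} (hst : s ⊆ t) :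
    Injective (map (Γ.induceHomOfLE hst).toHom) := by
  classical
  -- killing the vertices outside `s` is a retraction
  let r : Raag (Γ.induce t) →* Raag (Γ.induce s) :=
    lift (fun v => if hv : v.1 ∈ s then of _ ⟨v, hv⟩ else 1) fun u v huv => by
      by_cases hu : u.1 ∈ s <;> by_cases hv : v.1 ∈ s <;>
        simp only [hu, hv, dite_true, dite_false]
      · exact commute_of_adj huv
      all_goals simp
  have hr : r.comp (map (Γ.induceHomOfLE hst).toHom) = MonoidHom.id _ := by
    ext v
    simp [r, SimpleGraph.induceHom, v.2]
  exact LeftInverse.injective (g := r) (DFunLike.congr_fun hr)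

theorem commute_of_of_forall_adj {v : V} (hv : ∀ w, w ≠ v → Γ.Adj v w) (x : Raag Γ) :
    Commute x (of Γ v) := by
  have hgen (w : V) : of Γ w ∈ Subgroup.centralizer {of Γ v} := by
    rw [Subgroup.mem_centralizer_singleton_iff]
    obtain rfl | hw := eq_or_ne w v
    · rfl
    · exact (commute_of_adj (hv w hw)).eq.symm
  exact Subgroup.mem_centralizer_singleton_iff.mp (PresentedGroup.generated_by _ _ hgen x)

theorem of_zpow_notMem_range_map {W : Type*} {Δ : SimpleGraph W} (f : Δ →g Γ) {v : V}
    (hv : v ∉ Set.range f) {k : ℤ} (hk : k ≠ 0) : of Γ v ^ k ∉ (map f).range := by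
  classical
  -- the exponent sum of `v`
  let c : Raag Γ →* Multiplicative ℤ :=
    lift (fun w => if w = v then Multiplicative.ofAdd 1 else 1) fun _ _ _ => Commute.all _ _
  rintro ⟨x, hx⟩
  have hc : c.comp (map f) = 1 := by
    ext w
    simp [c, show f w ≠ v from fun h => hv ⟨w, h⟩]
  have hcount : c (of Γ v ^ k) = Multiplicative.ofAdd k := by simp [c, ← ofAdd_zsmul]
  rw [← hx, ← MonoidHom.comp_apply, hc, MonoidHom.one_apply] at hcount
  exact hk (ofAdd_eq_one.mp hcount.symm)

section StarSplitting

variable (Γ) (a : V)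

def starSplitSet : Bool → Set V
  | true => starSet Γ a
  | false => {a}ᶜ

theorem linkSet_subset_starSplitSet : ∀ i, linkSet Γ a ⊆ starSplitSet Γ a i
  | true => fun _ h => Or.inr h
  | false => fun _ h hw => Γ.loopless.irrefl a (hw ▸ h)

def starSplitMap (i : Bool) :
    Raag (Γ.induce (linkSet Γ a)) →* Raag (Γ.induce (starSplitSet Γ a i)) :=
  map (Γ.induceHomOfLE (linkSet_subset_starSplitSet Γ a i)).toHom

theorem starSplitMap_injective (i : Bool) : Injective (starSplitMap Γ a i) :=
  map_induceHomOfLE_injective _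

theorem starSplit_of_false_eq_of_true {w : V} (hw : Γ.Adj a w) :
    PushoutI.of (φ := starSplitMap Γ a) false
        (of _ ⟨w, linkSet_subset_starSplitSet Γ a false hw⟩) =
      PushoutI.of true (of _ ⟨w, Or.inr hw⟩) := by
  have h := (PushoutI.of_apply_eq_base (starSplitMap Γ a) false (of _ ⟨w, hw⟩)).trans
    (PushoutI.of_apply_eq_base _ true _).symm
  simp only [starSplitMap, map_of] at h
  exact h

def toStarSplit [DecidableEq V] : Raag Γ →* PushoutI (starSplitMap Γ a) :=
  lift
    (fun v => if hv : v = a then PushoutI.of true (of _ ⟨a, Or.inl rfl⟩)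
      else PushoutI.of false (of _ ⟨v, hv⟩))
    (fun u v huv => by
      by_cases hu : u = a <;> by_cases hv : v = a
      · exact (huv.ne (hu.trans hv.symm)).elim
      · subst hu
        simp only [dite_true, hv, dite_false, starSplit_of_false_eq_of_true Γ u huv]
        exact (commute_of_adj (Γ := Γ.induce (starSet Γ u))
          (u := ⟨u, Or.inl rfl⟩) (v := ⟨v, Or.inr huv⟩) huv).map _
      · subst hv
        simp only [dite_true, hu, dite_false, starSplit_of_false_eq_of_true Γ v huv.symm]
        exact (commute_of_adj (Γ := Γ.induce (starSet Γ v))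
          (u := ⟨u, Or.inr huv.symm⟩) (v := ⟨v, Or.inl rfl⟩) huv).map _
      · simp only [hu, hv, dite_false]
        exact (commute_of_adj (Γ := Γ.induce {a}ᶜ)
          (u := ⟨u, hu⟩) (v := ⟨v, hv⟩) huv).map _)

def fromStarSplit : PushoutI (starSplitMap Γ a) →* Raag Γ :=
  PushoutI.lift (fun i => map (SimpleGraph.Embedding.induce (starSplitSet Γ a i)).toHom)
    (map (SimpleGraph.Embedding.induce (linkSet Γ a)).toHom)
    (fun i => by ext v; simp only [MonoidHom.comp_apply, starSplitMap, map_of]; rfl)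

theorem toStarSplit_injective [DecidableEq V] : Injective (toStarSplit Γ a) := by
  have h : (fromStarSplit Γ a).comp (toStarSplit Γ a) = MonoidHom.id _ := by
    ext v
    by_cases hv : v = a
    · subst hv; simp [toStarSplit, fromStarSplit]
    · simp [toStarSplit, fromStarSplit, hv]
  exact LeftInverse.injective (g := fromStarSplit Γ a) (DFunLike.congr_fun h)

end StarSplitting

theorem commute_of_of_commute_of_zpow {a : V} {k : ℤ}
    (hk : k ≠ 0) {g : Raag Γ} (hg : Commute g (of Γ a ^ k)) : Commute g (of Γ a) := by
  classical
  set b : Raag (Γ.induce (starSplitSet Γ a true)) := of _ ⟨a, Or.inl rfl⟩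
  have hb : ∀ x, Commute x b := commute_of_of_forall_adj fun w hw =>
    (w.2 : w.1 ∈ starSet Γ a).resolve_left fun h => hw (Subtype.ext h)
  have hb_notMem : b ^ k ∉ (starSplitMap Γ a true).range := by
    refine of_zpow_notMem_range_map _ ?_ hk
    rintro ⟨w, hw⟩
    exact linkSet_subset_starSplitSet Γ a false w.2 (congrArg Subtype.val hw)
  have ha : toStarSplit Γ a (of Γ a) = PushoutI.of true b := (lift_of _ _ a).trans (dif_pos rfl)
  have hg' : Commute (toStarSplit Γ a g) (PushoutI.of true (b ^ k)) := by
    simpa [ha] using hg.map (toStarSplit Γ a)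
  obtain ⟨y, hy⟩ := PushoutI.mem_range_of_commute_of (starSplitMap_injective Γ a) hb_notMem
    (fun x => (hb x).zpow_right k) hg'
  refine Commute.of_map (toStarSplit_injective Γ a) ?_
  rw [← hy, ha]
  exact (hb y).map _

end Raag

theorem Commute.conj_of_conj_zpow {G : Type*} [Group G] {x : G} {k : ℤ}
    (hx : ∀ z, Commute z (x ^ k) → Commute z x) (t : G) {z : G}
    (h : Commute z (t⁻¹ * x ^ k * t)) : Commute z (t⁻¹ * x * t) := by
  have := hx (t * z * t⁻¹) (by simpa [mul_assoc] using h.map (MulAut.conj t))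
  simpa [mul_assoc] using this.map (MulAut.conj t⁻¹)

theorem commute_pow_conj_iff_general {V : Type*} (Γ : SimpleGraph V)
    (a b : V) (k m : ℤ) (hk : k ≠ 0) (hm : m ≠ 0) (g h : Raag Γ) :
    Commute (g⁻¹ * (Raag.of Γ a) ^ k * g) (h⁻¹ * (Raag.of Γ b) ^ m * h) ↔
      Commute (g⁻¹ * Raag.of Γ a * g) (h⁻¹ * Raag.of Γ b * h) := by
  constructor
  · intro H
    have Ha (z : Raag Γ) := Raag.commute_of_of_commute_of_zpow (g := z) (a := a) hk
    have Hb (z : Raag Γ) := Raag.commute_of_of_commute_of_zpow (g := z) (a := b) hm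
    exact (H.symm.conj_of_conj_zpow Ha g).symm.conj_of_conj_zpow Hb h
  · intro H
    have hconj (t x : Raag Γ) (n : ℤ) : (t⁻¹ * x * t) ^ n = t⁻¹ * x ^ n * t := by
      simpa using conj_zpow (a := t⁻¹) (b := x) (i := n)
    simpa only [hconj] using H.zpow_zpow k m

/-- `[(a^k)^g, (b^m)^h] = 1` iff `[a^g, b^h] = 1`, for nonzero `k, m`. -/
theorem commute_pow_conj_iff {V : Type*} [Fintype V] (Γ : SimpleGraph V)
    (a b : V) (k m : ℤ) (hk : k ≠ 0) (hm : m ≠ 0) (g h : Raag Γ) :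
    Commute (g⁻¹ * (Raag.of Γ a) ^ k * g) (h⁻¹ * (Raag.of Γ b) ^ m * h) ↔
      Commute (g⁻¹ * Raag.of Γ a * g) (h⁻¹ * Raag.of Γ b * h) :=
  commute_pow_conj_iff_general Γ a b k m hk hm g h
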